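/- arXiv:2403.08727 — 3 statements merged into one kernel-verified Lean document; each statement's English description precedes it below -/
import Mathlib

section
/- Let Λ be a lattice in ℝ^m with fundamental domain T of finite positive volume, and let U be a nonempty bounded Lebesgue measurable subset of ℝ^m. Then there exists τ ∈ T such that the number of lattice points in the translate τ + U satisfies |(τ + U) ∩ Λ| ≥ vol(U)/vol(T). -/
open MeasureTheory Set

open scoped ENNReal

/-!
The number of lattice points in `τ + U` is `N τ = ∑_{g ∈ L} 1_U (g - τ)`. Integrating over the
fundamental domain `T` unfolds the sum over `L` into an integral over the whole space, so
`∫_T N = vol U`. Thus the mean of `N` over `T` is `vol U / vol T`, and `N` is at least its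
mean somewhere on `T`.
-/

theorem AddSubgroup.finite_inter_of_isBounded {E : Type*} [NormedAddCommGroup E] [ProperSpace E]
    (L : AddSubgroup E) [DiscreteTopology L] {S : Set E} (hS : Bornology.IsBounded S) :
    (S ∩ L).Finite :=
  Metric.finite_isBounded_inter_isClosed DiscreteTopology.isDiscrete hS L.isClosed_of_discrete

section

variable {E : Type*} [AddCommGroup E]

theorem AddSubgroup.encard_image_add_left_inter_eq_tsum (L : AddSubgroup E) (U : Set E) (τ : E) :
    (((τ + ·) '' U ∩ L).encard : ℝ≥0∞) = ∑' g : L, U.indicator 1 ((g : E) - τ) := by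
  have hL : (τ + ·) '' U ∩ L = (↑) '' {g : L | (g : E) - τ ∈ U} := by
    ext x
    constructor
    · rintro ⟨⟨u, hu, rfl⟩, hx⟩
      exact ⟨⟨_, hx⟩, by simpa using hu, rfl⟩
    · rintro ⟨g, hg, rfl⟩
      exact ⟨⟨_, hg, add_sub_cancel τ (g : E)⟩, g.2⟩
  rw [hL, Subtype.val_injective.injOn.encard_image, ← ENNReal.tsum_set_one,
    tsum_subtype _ fun _ => (1 : ℝ≥0∞)]
  rfl

variable [MeasurableSpace E] [MeasurableAdd E] [MeasurableNeg E] {μ : Measure E}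
  [μ.IsNegInvariant]

theorem MeasureTheory.IsAddFundamentalDomain.setLIntegral_tsum_sub_eq_lintegral
    {L : AddSubgroup E} [Countable L] [VAddInvariantMeasure L E μ] {T : Set E}
    (hT : IsAddFundamentalDomain L T μ) {f : E → ℝ≥0∞} (hf : Measurable f) :
    ∫⁻ τ in T, ∑' g : L, f ((g : E) - τ) ∂μ = ∫⁻ x, f x ∂μ := by
  have hmeas (g : L) : Measurable fun τ => f ((g : E) - τ) := hf.comp (measurable_const_sub _)
  rw [lintegral_tsum fun g => (hmeas g).aemeasurable, ← lintegral_neg_eq_self,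
    hT.lintegral_eq_tsum']
  congr! 4 with g τ
  rw [AddSubgroup.vadd_def, vadd_eq_add, AddSubgroup.coe_neg, neg_add_rev, neg_neg,
    sub_eq_neg_add]

end

theorem lenstra_siegel_general (m : ℕ) (L : AddSubgroup (Fin m → ℝ))
    (hLdisc : DiscreteTopology L)
    (T : Set (Fin m → ℝ)) (hT : IsAddFundamentalDomain L T volume)
    (hTpos : 0 < volume T)
    (U : Set (Fin m → ℝ)) (hUbdd : Bornology.IsBounded U)
    (hUmeas : MeasurableSet U) :
    ∃ τ ∈ T, volume U / volume T ≤ ((((τ + ·) '' U) ∩ (L : Set (Fin m → ℝ))).ncard : ENNReal) := by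
  have : Countable L := TopologicalSpace.separableSpace_iff_countable.mp inferInstance
  have hcount (τ : Fin m → ℝ) : ((((τ + ·) '' U) ∩ (L : Set (Fin m → ℝ))).ncard : ℝ≥0∞) =
      ∑' g : L, U.indicator 1 ((g : Fin m → ℝ) - τ) := by
    have hfin := L.finite_inter_of_isBounded
      ((isometry_add_left τ).lipschitz.isBounded_image hUbdd)
    rw [← L.encard_image_add_left_inter_eq_tsum, ← ENat.toENNReal_coe, hfin.cast_ncard_eq]
  have hint : ∫⁻ τ in T, ((((τ + ·) '' U) ∩ (L : Set (Fin m → ℝ))).ncard : ℝ≥0∞) =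
      volume U := by
    simp_rw [hcount]
    rw [hT.setLIntegral_tsum_sub_eq_lintegral (measurable_one.indicator hUmeas),
      lintegral_indicator_one hUmeas]
  obtain ⟨τ, hτ, hmean⟩ := exists_setLAverage_le hTpos.ne' hT.nullMeasurableSet
    (hint ▸ hUbdd.measure_lt_top.ne)
  exact ⟨τ, hτ, by rwa [setLAverage_eq, hint] at hmean⟩

/-- Lenstra–Siegel averaging lemma: for a lattice `L` in `ℝ^m` with fundamental
domain `T` of finite positive volume and a nonempty bounded measurable set `U`,
some translate `τ + U` with `τ ∈ T` contains at least `vol U / vol T` lattice points. -/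
theorem lenstra_siegel (m : ℕ) (L : AddSubgroup (Fin m → ℝ))
    (hLdisc : DiscreteTopology L)
    (T : Set (Fin m → ℝ)) (hT : IsAddFundamentalDomain L T volume)
    (hTpos : 0 < volume T) (hTfin : volume T ≠ ⊤)
    (U : Set (Fin m → ℝ)) (hUne : U.Nonempty) (hUbdd : Bornology.IsBounded U)
    (hUmeas : MeasurableSet U) :
    ∃ τ ∈ T, volume U / volume T ≤ ((((τ + ·) '' U) ∩ (L : Set (Fin m → ℝ))).ncard : ENNReal) :=
  lenstra_siegel_general m L hLdisc T hT hTpos U hUbdd hUmeas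
end

section
/- For every number field K of degree m ≥ 1, the absolute value of the discriminant satisfies √|Δ_K| ≥ (m^m / m!) · (π/4)^{m/2}. -/
/-!
A nonzero algebraic integer has norm of absolute value at least `1`, while Minkowski's convex body
theorem produces one of norm at most `(4/π)^r₂ · m!/m^m · √|Δ_K|`, where `r₂` is the number of
complex places; this is `NumberField.abs_discr_ge'`. Since `2 r₂ ≤ m` and `π/4 < 1`, the factor
`(π/4)^r₂` is at least `(π/4)^{m/2}`.
-/

open NumberField Module InfinitePlace Real

namespace NumberField

variable (K : Type*) [Field K] [NumberField K]

theorem finrank_pow_div_factorial_mul_pow_nrComplexPlaces_le_sqrt_abs_discr :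
    ((finrank ℚ K : ℝ) ^ finrank ℚ K / (finrank ℚ K).factorial) * (π / 4) ^ nrComplexPlaces K ≤
      √|(discr K : ℝ)| := by
  refine Real.le_sqrt_of_sq_le (le_of_eq_of_le ?_ (Int.cast_abs (R := ℝ) ▸ abs_discr_ge' K))
  rw [← inv_div π 4, inv_pow, div_mul_eq_div_div_swap, div_inv_eq_mul, mul_pow, div_pow,
    ← pow_mul, ← pow_mul, mul_comm 2, mul_comm 2]

theorem nrComplexPlaces_le_finrank_div_two :
    (nrComplexPlaces K : ℝ) ≤ (finrank ℚ K : ℝ) / 2 := by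
  have h := card_add_two_mul_card_eq_rank K
  rw [le_div_iff₀ two_pos]
  exact_mod_cast (by omega : nrComplexPlaces K * 2 ≤ finrank ℚ K)

end NumberField

theorem minkowski_discr_bound_general (K : Type) [Field K] [NumberField K]
    (m : ℕ) (hm : m = finrank ℚ K) :
    ((m : ℝ) ^ m / (Nat.factorial m : ℝ)) * (Real.pi / 4) ^ ((m : ℝ) / 2) ≤
      Real.sqrt |(NumberField.discr K : ℝ)| := by
  subst hm
  have hπ : π / 4 ≤ 1 := by linarith [pi_le_four]
  calc _ ≤ ((finrank ℚ K : ℝ) ^ finrank ℚ K / (finrank ℚ K).factorial) *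
        (π / 4) ^ nrComplexPlaces K := by
        rw [← Real.rpow_natCast (π / 4)]
        gcongr _ * ?_
        exact Real.rpow_le_rpow_of_exponent_ge (by positivity) hπ
          (nrComplexPlaces_le_finrank_div_two K)
    _ ≤ _ := finrank_pow_div_factorial_mul_pow_nrComplexPlaces_le_sqrt_abs_discr K

/-- Minkowski's discriminant bound: `√|Δ_K| ≥ (m^m / m!) · (π/4)^{m/2}` for `m = [K:ℚ]`. -/
theorem minkowski_discr_bound (K : Type) [Field K] [NumberField K]
    (m : ℕ) (hm : m = finrank ℚ K) (hm1 : 1 ≤ m) :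
    ((m : ℝ) ^ m / (Nat.factorial m : ℝ)) * (Real.pi / 4) ^ ((m : ℝ) / 2) ≤
      Real.sqrt |(NumberField.discr K : ℝ)| :=
  minkowski_discr_bound_general K m hm
end

section
/- Let p_ℓ denote the ℓ-th prime. For all ℓ ≥ 125, Chebyshev's function satisfies ϑ(p_ℓ) < (3 + log 2)ℓ + ℓ·log ℓ + ℓ·log log ℓ, where ϑ(x) = Σ_{p ≤ x} log p. -/
/-- Chebyshev's function `ϑ(n) = ∑_{p ≤ n} log p`. -/
noncomputable def chebyshevTheta (n : ℕ) : ℝ :=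
  ∑ p ∈ Finset.filter Nat.Prime (Finset.range (n + 1)), Real.log p

/-!
Since `π(p_ℓ) = ℓ`, we have `ϑ(p_ℓ) ≤ π(p_ℓ) log p_ℓ = ℓ log p_ℓ`. Chebyshev's lower bound
`π(x) ≥ ((x - 1) log 2 - log (x + 2)) / log x`, taken at `x = 16 ℓ log ℓ`, gives
`p_ℓ ≤ 16 ℓ log ℓ`, and `log 16 = 4 log 2 < 3 + log 2`.
-/

open Nat hiding log
open Real Chebyshev
open scoped Nat.Prime

lemma chebyshevTheta_eq_theta (n : ℕ) : chebyshevTheta n = θ n := by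
  rw [chebyshevTheta, theta_eq_sum_primesLE_log, primesLE_eq_filter_range]

lemma primeCounting_nth_prime (n : ℕ) : π (nth Nat.Prime n) = n + 1 := by
  rw [primeCounting, primeCounting', count_succ, ← primeCounting', primeCounting'_nth_eq,
    if_pos (prime_nth_prime n)]

lemma theta_nth_prime_le (n : ℕ) : θ (nth Nat.Prime n) ≤ (n + 1) * log (nth Nat.Prime n) := by
  simpa [primeCounting_nth_prime] using theta_le_pi_mul_log (nth Nat.Prime n)

lemma nth_prime_le_of_lt_primeCounting_floor {x : ℝ} {k : ℕ} (hx : 0 ≤ x)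
    (h : k < π ⌊x⌋₊) : (nth Nat.Prime k : ℝ) ≤ x :=
  (Nat.le_floor_iff hx).mp (Nat.lt_succ_iff.mp (nth_lt_of_lt_count h))

lemma le_primeCounting_floor_mul_log {ℓ : ℕ} (hℓ : 17 ≤ ℓ) :
    ℓ ≤ π ⌊16 * ℓ * log ℓ⌋₊ := by
  have hℓR : (17 : ℝ) ≤ ℓ := by exact_mod_cast hℓ
  have hL : 1 ≤ log ℓ := by
    rw [le_log_iff_exp_le (by positivity)]
    linarith [exp_one_lt_d9]
  have hLℓ : log ℓ ≤ ℓ - 1 := log_le_sub_one_of_pos (by positivity)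
  set x := 16 * (ℓ : ℝ) * log ℓ
  have hx : 1 < x := by nlinarith
  have hx_le : x ≤ 16 * ℓ * (ℓ - 1) := mul_le_mul_of_nonneg_left hLℓ (by positivity)
  have hlog_cube : log (x + 2) ≤ 3 * log ℓ := calc
    log (x + 2) ≤ log ((ℓ : ℝ) ^ 3) := log_le_log (by positivity) (by nlinarith)
    _ = 3 * log ℓ := by rw [Real.log_pow]; norm_num
  have hlogx : log x ≤ log (x + 2) := log_le_log (by positivity) (by linarith)
  have hcount : (ℓ : ℝ) ≤ ((x - 1) * log 2 - log (x + 2)) / log x := by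
    rw [le_div_iff₀ (log_pos hx)]
    nlinarith [log_two_gt_d9]
  exact_mod_cast hcount.trans (pi_ge' hx)

lemma nth_prime_le_mul_log {ℓ : ℕ} (hℓ : 17 ≤ ℓ) :
    (nth Nat.Prime (ℓ - 1) : ℝ) ≤ 16 * ℓ * log ℓ :=
  nth_prime_le_of_lt_primeCounting_floor (by positivity)
    ((Nat.sub_lt (by omega) one_pos).trans_le (le_primeCounting_floor_mul_log hℓ))

/-- For `ℓ ≥ 125` and `p_ℓ` the `ℓ`-th prime (so `p_1 = 2`),
`ϑ(p_ℓ) < (3 + log 2)ℓ + ℓ log ℓ + ℓ log log ℓ`. -/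
theorem chebyshevTheta_nth_prime_lt (ℓ : ℕ) (hℓ : 125 ≤ ℓ) :
    chebyshevTheta (Nat.nth Nat.Prime (ℓ - 1)) <
      (3 + Real.log 2) * (ℓ : ℝ) + (ℓ : ℝ) * Real.log ℓ +
        (ℓ : ℝ) * Real.log (Real.log ℓ) := by
  set p := nth Nat.Prime (ℓ - 1)
  have hp : (0 : ℝ) < p := by exact_mod_cast (prime_nth_prime _).pos
  have hℓ0 : (0 : ℝ) < ℓ := by positivity
  have hL : 0 < log ℓ := log_pos (by exact_mod_cast (by omega : 1 < ℓ))
  have hlog_p : log p ≤ 4 * log 2 + log ℓ + log (log ℓ) := calc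
    log p ≤ log (16 * ℓ * log ℓ) := log_le_log hp (nth_prime_le_mul_log (by omega))
    _ = 4 * log 2 + log ℓ + log (log ℓ) := by
      rw [log_mul (by positivity) hL.ne', log_mul (by norm_num) hℓ0.ne',
        show (16 : ℝ) = 2 ^ 4 by norm_num, Real.log_pow]
      norm_num
  have hcard : ((ℓ - 1 : ℕ) : ℝ) + 1 = ℓ := by
    rw [Nat.cast_sub (by omega)]
    ring
  calc chebyshevTheta p = θ p := chebyshevTheta_eq_theta p
    _ ≤ ℓ * log p := hcard ▸ theta_nth_prime_le (ℓ - 1)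
    _ ≤ ℓ * (4 * log 2 + log ℓ + log (log ℓ)) := by gcongr
    _ < _ := by nlinarith [log_two_lt_d9]
end
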